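/- arXiv:1601.04119 — 7 statements merged into one kernel-verified Lean document; each statement's English description precedes it below -/
import Mathlib

section
/- For finite words s and t of natural numbers with the same length, the incompatibility relation is symmetric: if t is not a subword of s^⌢(c)^⌢s for any natural number c, then s is not a subword of t^⌢(c)^⌢t for any natural number c. -/
/-- Incompatibility of equal-length words is symmetric: if `t` is not an infix of
`s ++ [c] ++ s` for any `c`, then `s` is not an infix of `t ++ [c] ++ t` for any `c`. -/
theorem incompatible_symm (s t : List ℕ) (hlen : s.length = t.length)
    (hperp : ∀ c : ℕ, ¬ (t <:+: s ++ [c] ++ s)) :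
    ∀ c : ℕ, ¬ (s <:+: t ++ [c] ++ t) := by
  intro c h
  obtain ⟨p, q, hpq⟩ := h
  have hlens : p.length + (s.length + q.length) = t.length + (t.length + 1) := by
    simpa using congrArg List.length hpq
  set n := t.length with hn
  by_cases hk0 : p.length = 0
  · -- p = [], so s = t
    have hp : p = [] := List.eq_nil_of_length_eq_zero hk0
    subst hp
    simp only [List.nil_append, List.append_assoc] at hpq
    have hst : s = t := (List.append_inj hpq hlen).1
    exact hperp c ⟨[], [c] ++ t, by simp [hst]⟩
  by_cases hk1 : p.length = n + 1
  · -- q = [], so s = t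
    have hq : q = [] := by
      have : q.length = 0 := by omega
      exact List.eq_nil_of_length_eq_zero this
    subst hq
    have hpq' : p ++ s = (t ++ [c]) ++ t := by
      simpa using hpq
    have hst : s = t :=
      (List.append_inj' hpq' (by omega)).2
    exact hperp c ⟨[], [c] ++ t, by simp [hst]⟩
  -- middle case: 1 ≤ p.length ≤ n
  have hk : 1 ≤ p.length ∧ p.length ≤ n := by omega
  set k := p.length with hkdef
  have hkn : k - 1 < n := by omega
  set B := t.take (k - 1) with hB
  set A := t.drop k with hA
  set d := t[k - 1] with hd
  have ht : t = B ++ [d] ++ A := by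
    have h1 : t.take (k - 1) ++ [t[k-1]] = t.take k := by
      have := List.take_concat_get (hkn : k - 1 < t.length)
      rw [Nat.sub_add_cancel hk.1] at this; simpa using this
    calc t = t.take k ++ t.drop k := (List.take_append_drop k t).symm
    _ = B ++ [d] ++ A := by rw [← h1]
  have hpq2 : p ++ (s ++ q) = (B ++ [d]) ++ ((A ++ [c] ++ B) ++ ([d] ++ A)) := by
    rw [← List.append_assoc, hpq, ht]
    simp
  have hlenB : B.length = k - 1 := by
    simp [hB, List.length_take]; omega
  have hlenA : A.length = n - k := by
    simp [hA]; omega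
  have hlenp : p.length = (B ++ [d]).length := by
    simp [hlenB]; omega
  obtain ⟨hpeq, hrest⟩ := List.append_inj hpq2 hlenp
  have hlens2 : s.length = (A ++ [c] ++ B).length := by
    simp [hlenA, hlenB]; omega
  obtain ⟨hseq, hqeq⟩ := List.append_inj hrest hlens2
  refine hperp d ⟨A ++ [c], [c] ++ B, ?_⟩
  rw [hseq, ht]
  simp
end

section
/- Let s, t, s', t' be finite words of natural numbers with s ≠ t, length(s) = length(t) = l > 0, and length(s') = length(t') = m > 0. If the words s^⌢(s'(1))^⌢s^⌢⋯^⌢s^⌢(s'(m))^⌢s and t^⌢(t'(1))^⌢t^⌢⋯^⌢t^⌢(t'(m))^⌢t are compatible (i.e., not incompatible), then s' and t' are both constant words. -/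
/-- The expansion `s ⌢ (p 1) ⌢ s ⌢ ⋯ ⌢ (p m) ⌢ s`: `m+1` copies of `s`
interleaved with the single letters of `p`. -/
def expand (s p : List ℕ) : List ℕ :=
  p.foldl (fun acc a => acc ++ [a] ++ s) s

lemma expand_eq (s p : List ℕ) : expand s p = s ++ p.flatMap (fun a => a :: s) := by
  suffices h : ∀ acc : List ℕ, p.foldl (fun acc a => acc ++ [a] ++ s) acc
      = acc ++ p.flatMap (fun a => a :: s) from h s
  induction p with
  | nil => simp
  | cons a p ih =>
    intro acc
    rw [List.foldl_cons, ih]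
    simp

lemma flatMap_length (s p : List ℕ) :
    (p.flatMap (fun a => a :: s)).length = p.length * (s.length + 1) := by
  induction p with
  | nil => simp
  | cons a p ih => simp [ih]; ring

lemma expand_length (s p : List ℕ) :
    (expand s p).length = p.length * (s.length + 1) + s.length := by
  rw [expand_eq]
  have := flatMap_length s p
  simp only [List.length_append, this]
  ring

lemma flatMap_get (s : List ℕ) (b c : ℕ) (hc : c < s.length + 1) :
    ∀ (p : List ℕ) (hb : b < p.length)
      (h : b * (s.length + 1) + c < (p.flatMap (fun a => a :: s)).length),
    (p.flatMap (fun a => a :: s))[b * (s.length + 1) + c] = (p[b] :: s)[c] := by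
  induction b with
  | zero =>
    intro p hb h
    match p, hb with
    | a :: p, _ =>
      simp only [List.flatMap_cons]
      simp only [zero_mul, zero_add] at h ⊢
      rw [List.getElem_append_left (by simpa using hc)]
      simp
  | succ b ih =>
    intro p hb h
    match p, hb with
    | a :: p, hb =>
      simp only [List.flatMap_cons]
      have hge : (a :: s).length ≤ (b + 1) * (s.length + 1) + c := by
        simp only [List.length_cons]; nlinarith
      rw [List.getElem_append_right hge]
      have heq : (b + 1) * (s.length + 1) + c - (a :: s).length
          = b * (s.length + 1) + c := by
        simp only [List.length_cons]; ring_nf; omega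
      simp only [heq]
      have hb' : b < p.length := by simpa using hb
      rw [ih p hb' (by
        rw [flatMap_length]
        have : (b + 1) * (s.length + 1) ≤ p.length * (s.length + 1) :=
          Nat.mul_le_mul_right _ hb'
        nlinarith)]
      simp

lemma expand_bound (s p : List ℕ) {b c : ℕ} (hb : b ≤ p.length) (hc : c ≤ s.length)
    (h : b < p.length ∨ c < s.length) :
    b * (s.length + 1) + c < (expand s p).length := by
  rw [expand_length]
  have h1 : b * (s.length + 1) ≤ p.length * (s.length + 1) :=
    Nat.mul_le_mul_right _ hb
  rcases h with h | h
  · have : (b + 1) * (s.length + 1) ≤ p.length * (s.length + 1) :=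
      Nat.mul_le_mul_right _ h
    nlinarith
  · omega

lemma expand_get_block (s p : List ℕ) {b c : ℕ} (hb : b ≤ p.length) (hc : c < s.length)
    (h : b * (s.length + 1) + c < (expand s p).length) :
    (expand s p)[b * (s.length + 1) + c] = s[c] := by
  rcases Nat.eq_zero_or_pos b with rfl | hbpos
  · simp only [expand_eq, zero_mul, zero_add] at h ⊢
    rw [List.getElem_append_left (by omega)]
  · have hb' : b - 1 < p.length := by omega
    have hidx : b * (s.length + 1) + c = s.length + ((b - 1) * (s.length + 1) + (c + 1)) := by
      cases b with
      | zero => omega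
      | succ b => simp only [Nat.succ_sub_one]; ring_nf
    simp only [expand_eq] at h ⊢
    simp only [hidx]
    rw [List.getElem_append_right (by omega)]
    have : s.length + ((b - 1) * (s.length + 1) + (c + 1)) - s.length
        = (b - 1) * (s.length + 1) + (c + 1) := by omega
    simp only [this]
    rw [flatMap_get s (b-1) (c+1) (by omega) p hb' (by
      rw [List.length_append] at h; omega)]
    simp

lemma expand_get_sep (s p : List ℕ) {b : ℕ} (hb : b < p.length)
    (h : b * (s.length + 1) + s.length < (expand s p).length) :
    (expand s p)[b * (s.length + 1) + s.length] = p[b] := by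
  have hidx : b * (s.length + 1) + s.length = s.length + (b * (s.length + 1) + 0) := by omega
  simp only [expand_eq] at h ⊢
  simp only [hidx]
  rw [List.getElem_append_right (by omega)]
  have : s.length + (b * (s.length + 1) + 0) - s.length = b * (s.length + 1) + 0 := by omega
  simp only [this]
  rw [flatMap_get s b 0 (by omega) p hb (by rw [List.length_append] at h; omega)]
  simp

lemma expand_double (s p : List ℕ) (c : ℕ) :
    expand s p ++ [c] ++ expand s p = expand s (p ++ c :: p) := by
  simp [expand_eq, List.flatMap_append, List.flatMap_cons, List.append_assoc]

lemma getElem_idx_congr (L : List ℕ) {i j : ℕ} (h : i = j) (hj : j < L.length) :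
    L[i]'(h ▸ hj) = L[j] := by subst h; rfl

lemma expand_get_block_idx (s p : List ℕ) {b c n : ℕ} (hb : b ≤ p.length) (hc : c < s.length)
    (hn : n = b * (s.length + 1) + c) (h : n < (expand s p).length) :
    (expand s p)[n] = s[c] := by
  subst hn; exact expand_get_block s p hb hc h

lemma expand_get_sep_idx (s p : List ℕ) {b n : ℕ} (hb : b < p.length)
    (hn : n = b * (s.length + 1) + s.length) (h : n < (expand s p).length) :
    (expand s p)[n] = p[b] := by
  subst hn; exact expand_get_sep s p hb h

lemma expand_bound_idx (s p : List ℕ) {b c n : ℕ} (hb : b ≤ p.length) (hc : c ≤ s.length)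
    (h : b < p.length ∨ c < s.length) (hn : n = b * (s.length + 1) + c) :
    n < (expand s p).length := by
  subst hn; exact expand_bound s p hb hc h

/-- If `s ≠ t` have the same positive length, `s'`, `t'` have the same positive length,
and the expansions of `s` by `s'` and of `t` by `t'` are compatible (i.e. the latter is an
infix of the former doubled with one letter in between), then `s'` and `t'` are constant. -/
theorem compatible_expansions_constant (s t s' t' : List ℕ) (hst : s ≠ t)
    (hl : s.length = t.length) (hl0 : 0 < s.length)
    (hm : s'.length = t'.length) (hm0 : 0 < s'.length)
    (hcompat : ∃ c : ℕ, expand t t' <:+: expand s s' ++ [c] ++ expand s s') :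
    (∃ a, s' = List.replicate s'.length a) ∧ (∃ b, t' = List.replicate t'.length b) := by
  obtain ⟨c, pre, suf, hw⟩ := hcompat
  rw [expand_double s s' c] at hw
  have htl : t.length = s.length := hl.symm
  have htm : t'.length = s'.length := hm.symm
  have hql : (s' ++ c :: s').length = 2 * s'.length + 1 := by simp; omega
  have hzlen : (expand t t').length = s'.length * (s.length + 1) + s.length := by
    rw [expand_length, htl, htm]
  have hwlen : (expand s (s' ++ c :: s')).length
      = 2 * (s'.length * (s.length + 1)) + s.length + (s.length + 1) := by
    rw [expand_length, hql]; ring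
  have hkle : pre.length ≤ s'.length * (s.length + 1) + s.length + 1 := by
    have h1 := congrArg List.length hw
    simp only [List.length_append, hzlen, hwlen] at h1
    omega
  obtain ⟨a, r, hkar, hr⟩ : ∃ a r, pre.length = a * (s.length + 1) + r ∧ r < s.length + 1 :=
    ⟨_, _, by rw [Nat.mul_comm, Nat.div_add_mod], Nat.mod_lt _ (by omega)⟩
  -- evaluation of the infix inside the big word
  have hval : ∀ i (h1 : i < (expand t t').length)
      (h2 : pre.length + i < (expand s (s' ++ c :: s')).length),
      (expand t t')[i] = (expand s (s' ++ c :: s'))[pre.length + i] := by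
    intro i h1 h2
    have h4 : pre.length + i < (pre ++ expand t t').length := by
      simp only [List.length_append]; omega
    have h3 : pre.length + i < ((pre ++ expand t t') ++ suf).length := by
      simp only [List.length_append]; omega
    calc (expand t t')[i]
        = (pre ++ expand t t')[pre.length + i]'h4 := by
          rw [List.getElem_append_right (by omega)]
          exact (getElem_idx_congr _ (by omega) h1).symm
      _ = ((pre ++ expand t t') ++ suf)[pre.length + i]'h3 :=
          (List.getElem_append_left h4).symm
      _ = (expand s (s' ++ c :: s'))[pre.length + i] := List.getElem_of_eq hw h3
  rcases Nat.eq_zero_or_pos r with hr0 | hr1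
  · -- r = 0 : s = t, contradiction
    exfalso
    apply hst
    have ha : a ≤ s'.length + 1 := by
      have hexp : (s'.length + 1) * (s.length + 1)
          = s'.length * (s.length + 1) + s.length + 1 := by ring
      have hle : a * (s.length + 1) ≤ (s'.length + 1) * (s.length + 1) := by omega
      exact Nat.le_of_mul_le_mul_right hle (by omega)
    apply List.ext_getElem hl
    intro i h1 h2
    have hiz : i < (expand t t').length := by omega
    have hN : pre.length + i = a * (s.length + 1) + i := by omega
    have hkiw : pre.length + i < (expand s (s' ++ c :: s')).length :=
      expand_bound_idx s (s' ++ c :: s') (by omega) (by omega) (Or.inr h1) hN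
    have e1 : (expand t t')[i]'hiz = t[i] :=
      expand_get_block_idx t t' (b := 0) (by omega) (by omega) (by omega) hiz
    have e2 : (expand s (s' ++ c :: s'))[pre.length + i]'hkiw = s[i] :=
      expand_get_block_idx s (s' ++ c :: s') (by omega) (by omega) hN hkiw
    rw [← e1, ← e2]
    exact (hval i hiz hkiw).symm
  · -- r ≥ 1
    have ha : a ≤ s'.length := by
      by_contra hcon
      push_neg at hcon
      have h1 : (s'.length + 1) * (s.length + 1) ≤ a * (s.length + 1) :=
        Nat.mul_le_mul_right _ hcon
      have hexp : (s'.length + 1) * (s.length + 1)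
          = s'.length * (s.length + 1) + s.length + 1 := by ring
      omega
    -- t' is constant with value s[r-1]
    have hT : ∀ j (hj : j < t'.length), t'[j]'hj = s[r - 1]'(by omega) := by
      intro j hj
      have hjlt : j < s'.length := by omega
      have hiz : j * (t.length + 1) + t.length < (expand t t').length :=
        expand_bound_idx t t' (by omega) (by omega) (Or.inl hj) rfl
      have hN : pre.length + (j * (t.length + 1) + t.length)
          = (a + j + 1) * (s.length + 1) + (r - 1) := by
        have hexp : (a + j + 1) * (s.length + 1)
            = a * (s.length + 1) + j * (s.length + 1) + (s.length + 1) := by ring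
        rw [htl]
        omega
      have hkiw : pre.length + (j * (t.length + 1) + t.length)
          < (expand s (s' ++ c :: s')).length :=
        expand_bound_idx s (s' ++ c :: s') (by omega) (by omega) (Or.inr (by omega)) hN
      have e1 : (expand t t')[j * (t.length + 1) + t.length]'hiz = t'[j] :=
        expand_get_sep_idx t t' hj rfl hiz
      have e2 : (expand s (s' ++ c :: s'))[pre.length + (j * (t.length + 1) + t.length)]'hkiw
          = s[r - 1]'(by omega) :=
        expand_get_block_idx s (s' ++ c :: s') (by omega) (by omega) hN hkiw
      rw [← e1, ← e2]
      exact hval _ hiz hkiw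
    -- separators of the big word in range are all t[t.length - r]
    have hQ : ∀ j (hj : j ≤ s'.length),
        (s' ++ c :: s')[a + j]'(by omega) = t[t.length - r]'(by omega) := by
      intro j hj
      have hiz : j * (t.length + 1) + (t.length - r) < (expand t t').length :=
        expand_bound_idx t t' (by omega) (by omega) (Or.inr (by omega)) rfl
      have hN : pre.length + (j * (t.length + 1) + (t.length - r))
          = (a + j) * (s.length + 1) + s.length := by
        have hexp : (a + j) * (s.length + 1)
            = a * (s.length + 1) + j * (s.length + 1) := by ring
        rw [htl]
        omega
      have hkiw : pre.length + (j * (t.length + 1) + (t.length - r))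
          < (expand s (s' ++ c :: s')).length :=
        expand_bound_idx s (s' ++ c :: s') (by omega) (by omega) (Or.inl (by omega)) hN
      have e1 : (expand t t')[j * (t.length + 1) + (t.length - r)]'hiz
          = t[t.length - r]'(by omega) :=
        expand_get_block_idx t t' (by omega) (by omega) rfl hiz
      have e2 : (expand s (s' ++ c :: s'))[pre.length
            + (j * (t.length + 1) + (t.length - r))]'hkiw
          = (s' ++ c :: s')[a + j]'(by omega) :=
        expand_get_sep_idx s (s' ++ c :: s') (by omega) hN hkiw
      rw [← e1, ← e2]
      exact (hval _ hiz hkiw).symm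
    -- s' is constant with value t[t.length - r]
    have hS : ∀ i (hi : i < s'.length), s'[i]'hi = t[t.length - r]'(by omega) := by
      intro i hi
      rcases Nat.lt_or_ge i a with hia | hia
      · have h1 := hQ (s'.length + 1 + i - a) (by omega)
        have hidx : a + (s'.length + 1 + i - a) = s'.length + 1 + i := by omega
        rw [getElem_idx_congr _ hidx (by omega)] at h1
        rw [← h1]
        rw [List.getElem_append_right (by omega)]
        have hidx2 : s'.length + 1 + i - s'.length = i + 1 := by omega
        rw [getElem_idx_congr _ hidx2 (by simp; omega)]
        simp
      · have h1 := hQ (i - a) (by omega)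
        have hidx : a + (i - a) = i := by omega
        rw [getElem_idx_congr _ hidx (by omega)] at h1
        rw [← h1]
        rw [List.getElem_append_left hi]
    constructor
    · refine ⟨t[t.length - r]'(by omega), List.ext_getElem (by simp) ?_⟩
      intro i h1 h2
      rw [List.getElem_replicate]
      exact hS i h1
    · refine ⟨s[r - 1]'(by omega), List.ext_getElem (by simp [htm]) ?_⟩
      intro i h1 h2
      rw [List.getElem_replicate]
      exact hT i h1
end

section
/- Suppose for all n and all c ∈ ℕ there are exactly two occurrences of s_n in s_n ++ [c] ++ s_n (the two demonstrated ones). Define s'_n to be the expansion s_{2n}^⌢(s_{2n+1}(1))^⌢s_{2n}^⌢⋯^⌢(s_{2n+1}(r_{2n+1}-1))^⌢s_{2n}. Then for all n and all c ∈ ℕ there are exactly two occurrences of s'_n in s'_n ++ [c] ++ s'_n. -/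
/-- `t` occurs in `w` at position `j`. -/
def occursAt (t w : List ℕ) (j : ℕ) : Prop :=
  j + t.length ≤ w.length ∧ t = (w.drop j).take t.length

lemma expand_shift (t a : List ℕ) : ∀ (P b : List ℕ),
    P.foldl (fun acc x => acc ++ [x] ++ t) (a ++ b)
      = a ++ P.foldl (fun acc x => acc ++ [x] ++ t) b := by
  intro P
  induction P with
  | nil => intro b; simp
  | cons x P ih =>
      intro b
      simp only [List.foldl_cons]
      have e : a ++ b ++ [x] ++ t = a ++ (b ++ [x] ++ t) := by simp
      rw [e]
      exact ih (b ++ [x] ++ t)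

lemma expand_cons (t : List ℕ) (a : ℕ) (P : List ℕ) :
    expand t (a :: P) = t ++ a :: expand t P := by
  unfold expand
  simp only [List.foldl_cons]
  have h := expand_shift t (t ++ [a]) P t
  have e : t ++ [a] ++ t = (t ++ [a]) ++ t := by simp
  rw [e, h]
  simp

lemma expand_mid (t p p' : List ℕ) (c : ℕ) :
    expand t (p ++ c :: p') = expand t p ++ c :: expand t p' := by
  unfold expand
  rw [List.foldl_append, List.foldl_cons]
  have h := expand_shift t (p.foldl (fun acc x => acc ++ [x] ++ t) t ++ [c]) p' t
  have e : p.foldl (fun acc x => acc ++ [x] ++ t) t ++ [c] ++ t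
      = (p.foldl (fun acc x => acc ++ [x] ++ t) t ++ [c]) ++ t := by simp
  rw [e, h]
  simp

lemma expand_length_s3 (t : List ℕ) : ∀ P : List ℕ,
    (expand t P).length = P.length * (t.length + 1) + t.length := by
  intro P
  induction P with
  | nil => simp [expand]
  | cons a P ih =>
      rw [expand_cons]
      simp [ih]
      ring

lemma expand_drop (t : List ℕ) : ∀ (k : ℕ) (P : List ℕ), k ≤ P.length →
    (expand t P).drop (k * (t.length + 1)) = expand t (P.drop k) := by
  intro k
  induction k with
  | zero => intro P _; simp
  | succ k ih =>
      intro P hk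
      match P with
      | a :: P =>
        rw [expand_cons]
        have e1 : (k+1) * (t.length + 1) = (t.length + 1) + k * (t.length + 1) := by ring
        have e2 : t ++ a :: expand t P = (t ++ [a]) ++ expand t P := by simp
        have e3 : t.length + 1 = (t ++ [a]).length := by simp
        have e4 : ((t ++ [a]) ++ expand t P).drop (t.length + 1) = expand t P := by
          rw [e3, List.drop_left]
        rw [e1, ← List.drop_drop, e2, e4]
        exact ih P (Nat.succ_le_succ_iff.mp hk)

lemma expand_prefix_eq (t : List ℕ) : ∀ (p Q : List ℕ), p.length ≤ Q.length →
    expand t p = (expand t Q).take (expand t p).length → p = Q.take p.length := by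
  intro p
  induction p with
  | nil => intro Q _ _; simp
  | cons a p ih =>
      intro Q hlen heq
      match Q with
      | b :: Q =>
        rw [expand_cons, expand_cons] at heq
        have hlt : (t ++ a :: expand t p).length = t.length + (1 + (expand t p).length) := by
          simp; ring
        rw [hlt, List.take_length_add_append, Nat.add_comm, List.take_succ_cons] at heq
        have h2 := List.append_cancel_left heq
        rw [List.cons.injEq] at h2
        obtain ⟨hab, heq'⟩ := h2
        subst hab
        have := ih Q (Nat.succ_le_succ_iff.mp hlen) heq'
        simp [List.take_succ_cons, ← this]


lemma key_lemma (t p : List ℕ) (hp0 : p ≠ [])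
    (h1 : ∀ b j, occursAt t (t ++ [b] ++ t) j → j = 0 ∨ j = t.length + 1)
    (h2 : ∀ b j, occursAt p (p ++ [b] ++ p) j → j = 0 ∨ j = p.length + 1)
    (c j : ℕ) (h : occursAt (expand t p) (expand t p ++ [c] ++ expand t p) j) :
    j = 0 ∨ j = (expand t p).length + 1 := by
  obtain ⟨b₀, p', hpE⟩ := List.exists_cons_of_ne_nil hp0
  have hm : 1 ≤ p.length := by rw [hpE]; simp
  obtain ⟨hle, heq⟩ := h
  have hW : expand t p ++ [c] ++ expand t p = expand t (p ++ c :: p) := by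
    rw [expand_mid]; simp
  rw [hW] at hle heq
  set P : List ℕ := p ++ c :: p with hP
  have hPlen : P.length = p.length + 1 + p.length := by simp [hP]; omega
  have hwlen : (expand t p).length = p.length * (t.length + 1) + t.length := expand_length_s3 t p
  have hWlen : (expand t P).length
      = (p.length + 1 + p.length) * (t.length + 1) + t.length := by
    rw [expand_length_s3, hPlen]
  have hj : j ≤ (p.length + 1) * (t.length + 1) := by
    rw [hwlen, hWlen] at hle; nlinarith
  rcases eq_or_lt_of_le hj with hj' | hj'
  · right
    rw [hwlen, hj']; ring
  -- j < (p.length+1)*(t.length+1)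
  have hdiv := Nat.div_add_mod j (t.length + 1)
  set k := j / (t.length + 1) with hk
  set ρ := j % (t.length + 1) with hρ
  have hρlt : ρ < t.length + 1 := Nat.mod_lt _ (by omega)
  have hkm : k ≤ p.length := by
    have hx : (t.length + 1) * k < (t.length + 1) * (p.length + 1) := by nlinarith
    have := Nat.lt_of_mul_lt_mul_left hx
    omega
  have hkP : k ≤ P.length := by omega
  have hdropk : (expand t P).drop (k * (t.length + 1)) = expand t (P.drop k) :=
    expand_drop t k P hkP
  have hPk2 : 2 ≤ (P.drop k).length := by rw [List.length_drop]; omega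
  obtain ⟨b, rest, hrest⟩ := List.exists_cons_of_ne_nil
    (by intro hh; rw [hh] at hPk2; simp at hPk2 : P.drop k ≠ [])
  obtain ⟨b', Q', hQ'⟩ := List.exists_cons_of_ne_nil
    (by intro hh; rw [hrest, hh] at hPk2; simp at hPk2 : rest ≠ [])
  have hseg : expand t (P.drop k) = (t ++ b :: t) ++ (b' :: expand t Q') := by
    rw [hrest, hQ', expand_cons, expand_cons]; simp
  have htlew : t.length ≤ (expand t p).length := by rw [hwlen]; omega
  have htocc : t = ((expand t P).drop j).take t.length := by
    have hx := congrArg (List.take t.length) heq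
    rw [List.take_take, min_eq_left htlew] at hx
    rw [← hx, hpE, expand_cons, List.take_left]
  have hρ0 : ρ = 0 := by
    have hdropj : (expand t P).drop j = ((t ++ b :: t).drop ρ ++ (b' :: expand t Q')) := by
      have e1 : (expand t P).drop j = ((expand t P).drop (k * (t.length + 1))).drop ρ := by
        rw [List.drop_drop]
        congr 1
        rw [Nat.mul_comm]
        omega
      rw [e1, hdropk, hseg,
        List.drop_append_of_le_length (by simp only [List.length_append, List.length_cons]; omega)]
    have hocc : occursAt t (t ++ [b] ++ t) ρ := by
      refine ⟨by simp only [List.length_append, List.length_cons]; omega, ?_⟩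
      have e : t ++ [b] ++ t = t ++ b :: t := by simp
      rw [e]
      rw [hdropj] at htocc
      calc t = ((t ++ b :: t).drop ρ ++ (b' :: expand t Q')).take t.length := htocc
        _ = ((t ++ b :: t).drop ρ).take t.length :=
          List.take_append_of_le_length
            (by rw [List.length_drop]; simp only [List.length_append, List.length_cons]; omega)
    rcases h1 b ρ hocc with h0 | hx
    · exact h0
    · omega
  rcases Nat.eq_zero_or_pos k with hk0 | hk1
  · left
    rw [hk0, Nat.mul_zero, Nat.zero_add] at hdiv
    omega
  · exfalso
    have hjk : j = k * (t.length + 1) := by rw [Nat.mul_comm]; omega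
    rw [hjk, hdropk] at heq
    have hlenk : p.length ≤ (P.drop k).length := by rw [List.length_drop]; omega
    have hpQ := expand_prefix_eq t p (P.drop k) hlenk heq
    have hocc : occursAt p (p ++ [c] ++ p) k := by
      refine ⟨by simp only [List.length_append, List.length_cons]; omega, ?_⟩
      have e : p ++ [c] ++ p = P := by rw [hP]; simp
      rw [e]; exact hpQ
    rcases h2 c k hocc with h0 | hx <;> omega

/-- If each `s n` occurs in `s n ++ [c] ++ s n` only at the two demonstrated positions,
then the same holds for the grouped spacer words
`s' n = s (2n) ⌢ (s (2n+1) 1) ⌢ s (2n) ⌢ ⋯ ⌢ (s (2n+1) (r-1)) ⌢ s (2n)`. -/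
theorem grouped_spacers_two_occurrences (r : ℕ → ℕ) (s : ℕ → List ℕ)
    (hr : ∀ n, 2 ≤ r n) (hlen : ∀ n, (s n).length = r n - 1)
    (htwo : ∀ n (c j : ℕ), occursAt (s n) (s n ++ [c] ++ s n) j →
      j = 0 ∨ j = (s n).length + 1) :
    ∀ n (c j : ℕ),
      occursAt (expand (s (2*n)) (s (2*n+1)))
        (expand (s (2*n)) (s (2*n+1)) ++ [c] ++ expand (s (2*n)) (s (2*n+1))) j →
      j = 0 ∨ j = (expand (s (2*n)) (s (2*n+1))).length + 1 := by
  intro n c j h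
  by_cases hp0 : s (2*n+1) = []
  · rw [hp0] at h ⊢
    simp only [expand, List.foldl_nil] at h ⊢
    exact htwo (2*n) c j h
  · exact key_lemma (s (2*n)) (s (2*n+1)) hp0 (htwo (2*n)) (htwo (2*n+1)) c j h
end

section
/- Let v be a finite binary word starting and ending with 0, and let V be an infinite binary word built from v, i.e., V = v ++ 1^{a_1} ++ v ++ 1^{a_2} ++ ⋯ for some sequence (a_n) of naturals. Then the sequence (a_n) and the positions of the demonstrated (expected) occurrences of v in this decomposition are unique: if V = v ++ 1^{b_1} ++ v ++ 1^{b_2} ++ ⋯ for another sequence (b_n), then a_n = b_n for all n. -/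
/-- Start position of the `n`-th copy of a word of length `L` in the decomposition
determined by the gap sequence `a`. -/
def posFrom (L : ℕ) (a : ℕ → ℕ) : ℕ → ℕ
  | 0 => 0
  | n + 1 => posFrom L a n + L + a n

/-- `V` is built from `v` with gap sequence `a`: `V = v 1^{a 0} v 1^{a 1} v ⋯`. -/
def BuiltFrom (v : List Bool) (a : ℕ → ℕ) (V : ℕ → Bool) : Prop :=
  (∀ n i, i < v.length → V (posFrom v.length a n + i) = v.getD i false) ∧
  (∀ n j, j < a n → V (posFrom v.length a n + v.length + j) = true)

private lemma gap_eq {V : ℕ → Bool} {p k k' : ℕ}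
    (h1 : ∀ j < k, V (p + j) = true) (h2 : V (p + k) = false)
    (h3 : ∀ j < k', V (p + j) = true) (h4 : V (p + k') = false) : k = k' := by
  rcases lt_trichotomy k k' with h | h | h
  · exact absurd (h3 k h) (by simp [h2])
  · exact h
  · exact absurd (h1 k' h) (by simp [h4])

/-- If `v` starts and ends with `0` and the infinite word `V` is built from `v`
via gap sequences `a` and `b`, then `a = b` (the decomposition is unique). -/
theorem builtFrom_unique (v : List Bool)
    (hhead : v.head? = some false) (hlast : v.getLast? = some false)
    (V : ℕ → Bool) (a b : ℕ → ℕ)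
    (ha : BuiltFrom v a V) (hb : BuiltFrom v b V) : a = b := by
  obtain ⟨ha1, ha2⟩ := ha
  obtain ⟨hb1, hb2⟩ := hb
  set L := v.length with hL
  have hlen : 0 < L := by
    cases v with
    | nil => simp at hhead
    | cons x xs => simp [hL]
  have hget0 : v.getD 0 false = false := by
    cases v with
    | nil => simp at hhead
    | cons x xs =>
      simp only [List.head?_cons, Option.some.injEq] at hhead
      simp [hhead]
  -- the false at the start of the (n+1)-st copy
  have hfa : ∀ n, V (posFrom L a n + L + a n) = false := by
    intro n
    have := ha1 (n + 1) 0 hlen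
    rw [add_zero] at this
    rw [show posFrom L a n + L + a n = posFrom L a (n + 1) from rfl, this, hget0]
  have hfb : ∀ n, V (posFrom L b n + L + b n) = false := by
    intro n
    have := hb1 (n + 1) 0 hlen
    rw [add_zero] at this
    rw [show posFrom L b n + L + b n = posFrom L b (n + 1) from rfl, this, hget0]
  -- step: equal positions at n give equal gaps at n
  have step : ∀ n, posFrom L a n = posFrom L b n → a n = b n := by
    intro n hp
    refine gap_eq (p := posFrom L a n + L) (fun j hj => ha2 n j hj) (hfa n)
      (fun j hj => ?_) ?_
    · rw [hp]; exact hb2 n j hj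
    · rw [hp]; exact hfb n
  have key : ∀ n, posFrom L a n = posFrom L b n := by
    intro n
    induction n with
    | zero => rfl
    | succ n ih =>
      show posFrom L a n + L + a n = posFrom L b n + L + b n
      rw [ih, step n ih]
  funext n
  exact step n (key n)
end

section
/- Let x, y ∈ {0,1}^ℤ both be built from v_n and from v_{n+1} (with expected occurrences refining), with r_{n-1} ≥ 2 copies of v_{n-1} in each v_n. If the expected occurrence of v_{n-1} containing position 0 is the i-th (same index i) occurrence within the expected occurrence of v_n containing position 0, for both x and y, then the interval of overlap [c,d] between the expected occurrence of v_n containing 0 in x and the expected occurrence of v_n containing 0 in y satisfies d - c ≥ length(v_{n-1}). -/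
/-- Expansion of a binary word `v` by a gap word `s`. -/
def expandB (v : List Bool) (s : List ℕ) : List Bool :=
  s.foldl (fun acc a => acc ++ List.replicate a true ++ v) v

/-- Offset of the `j`-th copy of a word of length `L` inside the expansion with gaps `s`. -/
def copyOff (L : ℕ) (s : List ℕ) (j : ℕ) : ℕ :=
  j * L + (s.take j).sum


lemma foldl_len (v : List Bool) (s : List ℕ) (init : List Bool) :
    (s.foldl (fun acc a => acc ++ List.replicate a true ++ v) init).length
      = init.length + s.sum + s.length * v.length := by
  induction s generalizing init with
  | nil => simp
  | cons a t ih =>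
      simp only [List.foldl_cons]
      rw [ih]
      simp [List.length_append]
      ring

lemma expandB_len (v : List Bool) (s : List ℕ) :
    (expandB v s).length = v.length + s.sum + s.length * v.length := by
  simpa [expandB] using foldl_len v s v

/-- If the expected occurrences of `v_n = expandB vprev s` containing position `0` in `x`
and in `y` both have the copy of `vprev` containing `0` in the same position `i`, then the
interval of overlap `[c, d]` of the two occurrences satisfies `d - c ≥ length vprev`. -/
theorem overlap_same_label (vprev : List Bool) (hv : vprev ≠ []) (s : List ℕ) (hs : s ≠ [])
    (x y : ℤ → Bool) (lx ly : ℤ)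
    (hx : ∀ i : ℕ, i < (expandB vprev s).length →
      x (lx + i) = (expandB vprev s).getD i false)
    (hy : ∀ i : ℕ, i < (expandB vprev s).length →
      y (ly + i) = (expandB vprev s).getD i false)
    (hx0 : lx ≤ 0 ∧ 0 < lx + (expandB vprev s).length)
    (hy0 : ly ≤ 0 ∧ 0 < ly + (expandB vprev s).length)
    (hlabel : ∃ i ≤ s.length,
      (lx + copyOff vprev.length s i ≤ 0 ∧
        0 < lx + copyOff vprev.length s i + vprev.length) ∧
      (ly + copyOff vprev.length s i ≤ 0 ∧
        0 < ly + copyOff vprev.length s i + vprev.length)) :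
    (vprev.length : ℤ) ≤ (min lx ly + (expandB vprev s).length - 1) - max lx ly := by
  obtain ⟨i, hi, ⟨hx1, hx2⟩, ⟨hy1, hy2⟩⟩ := hlabel
  have hL : 0 < (vprev.length : ℤ) := by
    exact_mod_cast List.length_pos_iff.mpr hv
  have hslen : 1 ≤ s.length := List.length_pos_iff.mpr hs
  have hlen : 2 * vprev.length ≤ (expandB vprev s).length := by
    rw [expandB_len]
    nlinarith [Nat.zero_le s.sum]
  have hlen' : (2 * vprev.length : ℤ) ≤ ((expandB vprev s).length : ℤ) := by
    exact_mod_cast hlen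
  have h1 : lx - ly ≤ (vprev.length : ℤ) - 1 := by linarith
  have h2 : ly - lx ≤ (vprev.length : ℤ) - 1 := by linarith
  rcases le_total lx ly with h | h
  · rw [min_eq_left h, max_eq_right h]; linarith
  · rw [min_eq_right h, max_eq_left h]; linarith
end

section
/- With the setup of rank-one labeled words: let x, y be built from v_{n-1} and v_n, with labels λ_{n-1}(x) = i satisfying 1 < i < r_{n-1} (i.e., κ_{n-1}(x) = 0) and λ_{n-1}(y) finite. Then the interval of overlap [c,d] between the expected occurrence of v_n containing 0 in x and the expected occurrence of v_n containing 0 in y satisfies d - c ≥ length(v_{n-1}). -/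
lemma expandB_foldl_length (v : List Bool) :
    ∀ (s : List ℕ) (acc : List Bool),
      (s.foldl (fun acc a => acc ++ List.replicate a true ++ v) acc).length
        = acc.length + s.sum + s.length * v.length := by
  intro s
  induction s with
  | nil => intro acc; simp
  | cons a t ih =>
    intro acc
    simp only [List.foldl_cons, ih, List.length_append, List.length_replicate,
      List.sum_cons, List.length_cons]
    ring

lemma expandB_length (v : List Bool) (s : List ℕ) :
    (expandB v s).length = (s.length + 1) * v.length + s.sum := by
  rw [expandB, expandB_foldl_length]
  ring

lemma take_sum_le (s : List ℕ) (j : ℕ) : (s.take j).sum ≤ s.sum := by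
  calc (s.take j).sum ≤ (s.take j).sum + (s.drop j).sum := Nat.le_add_right _ _
  _ = s.sum := by rw [← List.sum_append, List.take_append_drop]

/-- If in `x` the copy of `vprev` containing position `0` is an interior copy
(`κ = 0`, i.e. label strictly between the first and the last), and in `y` position `0`
lies in some copy of `vprev`, then the interval of overlap `[c, d]` of the two expected
occurrences of `v_n = expandB vprev s` containing `0` satisfies `d - c ≥ length vprev`. -/
theorem overlap_interior_label (vprev : List Bool) (hv : vprev ≠ [])
    (s : List ℕ) (hs : s ≠ [])
    (S : ℕ) (hbound : ∀ a ∈ s, a ≤ S) (hSL : S < vprev.length)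
    (x y : ℤ → Bool) (lx ly : ℤ)
    (hx : ∀ i : ℕ, i < (expandB vprev s).length →
      x (lx + i) = (expandB vprev s).getD i false)
    (hy : ∀ i : ℕ, i < (expandB vprev s).length →
      y (ly + i) = (expandB vprev s).getD i false)
    (hx0 : lx ≤ 0 ∧ 0 < lx + (expandB vprev s).length)
    (hy0 : ly ≤ 0 ∧ 0 < ly + (expandB vprev s).length)
    (hlabelx : ∃ i, 1 ≤ i ∧ i < s.length ∧
      lx + copyOff vprev.length s i ≤ 0 ∧
      0 < lx + copyOff vprev.length s i + vprev.length)
    (hlabely : ∃ j ≤ s.length,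
      ly + copyOff vprev.length s j ≤ 0 ∧
      0 < ly + copyOff vprev.length s j + vprev.length) :
    (vprev.length : ℤ) ≤ (min lx ly + (expandB vprev s).length - 1) - max lx ly := by
  obtain ⟨i, hi1, hi2, hxi1, hxi2⟩ := hlabelx
  obtain ⟨j, hj, hyj1, hyj2⟩ := hlabely
  set L := vprev.length with hL
  have hN : (expandB vprev s).length = (s.length + 1) * L + s.sum :=
    expandB_length vprev s
  -- bounds on copy offsets
  have ha : copyOff L s j + L ≤ (expandB vprev s).length := by
    rw [hN, copyOff]
    have h1 : j * L ≤ s.length * L := Nat.mul_le_mul_right L hj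
    have h2 := take_sum_le s j
    nlinarith
  have hb : L ≤ copyOff L s i := by
    rw [copyOff]
    calc L = 1 * L := (one_mul L).symm
    _ ≤ i * L := Nat.mul_le_mul_right L hi1
    _ ≤ _ := Nat.le_add_right _ _
  have hc : copyOff L s i + 2 * L ≤ (expandB vprev s).length := by
    rw [hN, copyOff]
    have h1 : i + 1 ≤ s.length := hi2
    have h2 : (i + 2) * L ≤ (s.length + 1) * L :=
      Nat.mul_le_mul_right L (by omega)
    have h3 := take_sum_le s i
    nlinarith
  -- move to integers
  have ha' : (copyOff L s j : ℤ) + L ≤ (expandB vprev s).length := by exact_mod_cast ha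
  have hb' : (L : ℤ) ≤ copyOff L s i := by exact_mod_cast hb
  have hc' : (copyOff L s i : ℤ) + 2 * L ≤ (expandB vprev s).length := by exact_mod_cast hc
  have hd' : (0 : ℤ) ≤ copyOff L s j := Int.natCast_nonneg _
  omega
end

section
/- Let x, y ∈ {0,1}^ℤ be built from each v_n of a generating sequence (v_n), and suppose there is N such that λ_n(x) = λ_n(y) < ∞ for all n ≥ N, where λ_n records the index of the expected occurrence of v_n containing position 0 within the expected occurrence of v_{n+1} containing position 0. Then x and y are in the same shift orbit: there exists k ∈ ℤ with σ^k(x) = y. -/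
/-- If `x` and `y` are built from every `v n` of a generating sequence, the expected
occurrences of `v n` containing position `0` (starting at `lx n`, resp. `ly n`) carry
the same labels `lam n` for all `n ≥ N` (so the relative start positions inside the
occurrence of `v (n+1)` agree), then `x` and `y` lie in the same shift orbit. -/
theorem same_labels_same_orbit (v : ℕ → List Bool) (x y : ℤ → Bool)
    (lx ly : ℕ → ℤ) (N : ℕ) (lam : ℕ → ℕ) (off : ℕ → ℕ → ℤ)
    (hxocc : ∀ n, N ≤ n → ∀ i : ℕ, i < (v n).length →
      x (lx n + i) = (v n).getD i false)
    (hyocc : ∀ n, N ≤ n → ∀ i : ℕ, i < (v n).length →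
      y (ly n + i) = (v n).getD i false)
    (hx0 : ∀ n, N ≤ n → lx n ≤ 0 ∧ 0 < lx n + (v n).length)
    (hy0 : ∀ n, N ≤ n → ly n ≤ 0 ∧ 0 < ly n + (v n).length)
    (hlx : ∀ n, N ≤ n → lx n = lx (n + 1) + off n (lam n))
    (hly : ∀ n, N ≤ n → ly n = ly (n + 1) + off n (lam n))
    (hcover : ∀ m : ℤ, ∃ n, N ≤ n ∧ ly n ≤ m ∧ m < ly n + (v n).length) :
    ∃ k : ℤ, ∀ i : ℤ, x (i + k) = y i := by
  have hd : ∀ n, N ≤ n → lx n - ly n = lx N - ly N := by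
    intro n hn
    induction n with
    | zero => have hN : N = 0 := Nat.le_zero.mp hn; rw [hN]
    | succ m ih =>
      rcases Nat.lt_or_ge N (m+1) with h | h
      · have hm : N ≤ m := by omega
        have := ih hm
        have h1 := hlx m hm
        have h2 := hly m hm
        omega
      · have hN : N = m + 1 := le_antisymm hn h
        rw [hN]
  refine ⟨lx N - ly N, fun i => ?_⟩
  obtain ⟨n, hn, h1, h2⟩ := hcover i
  set j : ℕ := (i - ly n).toNat with hj
  have hjv : (j : ℤ) = i - ly n := Int.toNat_of_nonneg (by omega)
  have hjl : j < (v n).length := by omega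
  have hx := hxocc n hn j hjl
  have hy := hyocc n hn j hjl
  have hk := hd n hn
  have e1 : lx n + (j : ℤ) = i + (lx N - ly N) := by omega
  have e2 : ly n + (j : ℤ) = i := by omega
  rw [e1] at hx; rw [e2] at hy; rw [hx, hy]
end
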